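/- arXiv:1008.3959 — 6 statements merged into one kernel-verified Lean document; each statement's English description precedes it below -/
import Mathlib

section
/- Let f : E → O be a continuous map admitting a lifting function L_f. Suppose A is a closed subspace of a topological space X such that the pair (X, A) has the homotopy extension property with respect to E, and suppose L_f is regular. If G : (X × {0}) ∪ (A × I) → E is a continuous map satisfying f(G(a,t)) = f(G(a,0)) for all a ∈ A, t ∈ I, then there exists a continuous map H : X × I → E extending G such that f(H(x,t)) = f(H(x,0)) for all x ∈ X and t ∈ I. -/
open unitInterval

universe u

/-- given a regular lifting function for `f : E → O`, and a pair `(X, A)`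
(`A` closed in `X`) having the homotopy extension property with respect to `E`, any map
`G` on `(X × {0}) ∪ (A × I)` (encoded by its two pieces `g` and `R`) whose `A × I` part is
fiberwise constant extends to `H : X × I → E` with `f (H (x,t)) = f (H (x,0))`. -/
theorem stmt1 {E O X : Type u} [TopologicalSpace E] [TopologicalSpace O] [TopologicalSpace X]
    (f : C(E, O))
    (L : C({p : E × C(I, O) // f p.1 = p.2 0}, C(I, E)))
    (hL0 : ∀ p, L p 0 = p.1.1)
    (hLf : ∀ p t, f (L p t) = p.1.2 t)
    (hreg : ∀ (e : E) (t : I), L ⟨(e, ContinuousMap.const I (f e)), rfl⟩ t = e)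
    (A : Set X) (hA : IsClosed A)
    (hHEP : ∀ (g : C(X, E)) (R : C(A × I, E)), (∀ a : A, R (a, 0) = g a) →
      ∃ H : C(X × I, E), (∀ x, H (x, 0) = g x) ∧ ∀ (a : A) (t : I), H (a, t) = R (a, t))
    (g : C(X, E)) (R : C(A × I, E)) (hcomp : ∀ a : A, R (a, 0) = g a)
    (hfib : ∀ (a : A) (t : I), f (R (a, t)) = f (R (a, 0))) :
    ∃ H : C(X × I, E), (∀ x, H (x, 0) = g x) ∧ (∀ (a : A) (t : I), H (a, t) = R (a, t)) ∧
      ∀ (x : X) (t : I), f (H (x, t)) = f (H (x, 0)) := by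
  haveI : ContinuousMul I :=
    ⟨Continuous.subtype_mk ((continuous_subtype_val.comp continuous_fst).mul
      (continuous_subtype_val.comp continuous_snd)) _⟩
  obtain ⟨H', hH'0, hH'A⟩ := hHEP g R hcomp
  let K : C((X × I) × I, O) :=
    ⟨fun p => f (H' (p.1.1, p.1.2 * σ p.2)),
      f.continuous.comp (H'.continuous.comp ((continuous_fst.comp continuous_fst).prodMk
        ((continuous_snd.comp continuous_fst).mul
          (continuous_symm.comp continuous_snd))))⟩
  have hK0 : ∀ q : X × I, f (H' q) = K.curry q 0 := by
    intro q
    show f (H' q) = f (H' (q.1, q.2 * σ 0))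
    rw [symm_zero, mul_one]
  let Φ : C(X × I, {p : E × C(I, O) // f p.1 = p.2 0}) :=
    ⟨fun q => ⟨(H' q, K.curry q), hK0 q⟩, by
      apply Continuous.subtype_mk
      exact (H'.continuous).prodMk K.curry.continuous⟩
  refine ⟨⟨fun q => L (Φ q) 1, by fun_prop⟩, ?_, ?_, ?_⟩
  · intro x
    have : Φ (x, 0) = ⟨(g x, ContinuousMap.const I (f (g x))), rfl⟩ := by
      apply Subtype.ext
      refine Prod.ext ?_ ?_
      · exact hH'0 x
      · ext s
        show f (H' (x, 0 * σ s)) = f (g x)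
        rw [zero_mul, hH'0 x]
    simp only [ContinuousMap.coe_mk, this, hreg]
  · intro a t
    have : Φ (a, t) = ⟨(R (a, t), ContinuousMap.const I (f (R (a, t)))), rfl⟩ := by
      apply Subtype.ext
      refine Prod.ext ?_ ?_
      · exact hH'A a t
      · ext s
        show f (H' ((a : X), t * σ s)) = f (R (a, t))
        rw [hH'A a (t * σ s), hfib a (t * σ s), hfib a t]
    simp only [ContinuousMap.coe_mk, this, hreg]
  · intro x t
    have h1 : ∀ t : I, f (L (Φ (x, t)) 1) = f (H' (x, 0)) := by
      intro t
      rw [hLf]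
      show f (H' (x, t * σ 1)) = f (H' (x, 0))
      rw [symm_one, mul_zero]
    simp only [ContinuousMap.coe_mk, h1]
end

section
/- Let f₁ : E₁ → O and f₂ : E₂ → O be maps over O, with f₂ admitting a regular lifting function. Let A ⊆ O be closed, and suppose the pair (E₁, f₁⁻¹(A)) has the homotopy extension property with respect to E₂. Suppose k₁, k₂ : f₁⁻¹(A) → f₂⁻¹(A) are fiber maps (f₂ ∘ kᵢ = f₁ on f₁⁻¹(A)) that are fiber homotopic (homotopic via a homotopy R with f₂(R(a,t)) = f₁(a) for all a, t). If k₁ extends to a fiber map K₁ : E₁ → E₂ (i.e., f₂ ∘ K₁ = f₁), then k₂ extends to a fiber map K₂ : E₁ → E₂ and K₁ and K₂ are fiber homotopic. -/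
open unitInterval

universe u

/-- extension of fiber homotopies.  If `f₂` has a regular lifting function,
`A ⊆ O` is closed, the pair `(E₁, f₁⁻¹(A))` has the homotopy extension property with
respect to `E₂`, and `k₁, k₂ : f₁⁻¹(A) → f₂⁻¹(A)` are fiber homotopic fiber maps such
that `k₁` extends to a fiber map `K₁ : E₁ → E₂`, then `k₂` extends to a fiber map `K₂`
and `K₁`, `K₂` are fiber homotopic. -/
theorem stmt2 {E₁ E₂ O : Type u} [TopologicalSpace E₁] [TopologicalSpace E₂]
    [TopologicalSpace O]
    (f₁ : C(E₁, O)) (f₂ : C(E₂, O))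
    (L : C({p : E₂ × C(I, O) // f₂ p.1 = p.2 0}, C(I, E₂)))
    (hL0 : ∀ p, L p 0 = p.1.1)
    (hLf : ∀ p t, f₂ (L p t) = p.1.2 t)
    (hreg : ∀ (e : E₂) (t : I), L ⟨(e, ContinuousMap.const I (f₂ e)), rfl⟩ t = e)
    (A : Set O) (hA : IsClosed A)
    (hHEP : ∀ (g : C(E₁, E₂)) (R : C((f₁ ⁻¹' A) × I, E₂)),
      (∀ a : f₁ ⁻¹' A, R (a, 0) = g a) →
      ∃ H : C(E₁ × I, E₂), (∀ x, H (x, 0) = g x) ∧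
        ∀ (a : f₁ ⁻¹' A) (t : I), H (a, t) = R (a, t))
    (k₁ k₂ : C(f₁ ⁻¹' A, f₂ ⁻¹' A))
    (hk₁ : ∀ a : f₁ ⁻¹' A, f₂ (k₁ a) = f₁ a)
    (hk₂ : ∀ a : f₁ ⁻¹' A, f₂ (k₂ a) = f₁ a)
    (Rk : C((f₁ ⁻¹' A) × I, f₂ ⁻¹' A))
    (hRk0 : ∀ a, Rk (a, 0) = k₁ a) (hRk1 : ∀ a, Rk (a, 1) = k₂ a)
    (hRkfib : ∀ (a : f₁ ⁻¹' A) (t : I), f₂ (Rk (a, t)) = f₁ a)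
    (K₁ : C(E₁, E₂)) (hK₁fib : ∀ e, f₂ (K₁ e) = f₁ e)
    (hK₁ext : ∀ a : f₁ ⁻¹' A, K₁ a = k₁ a) :
    ∃ K₂ : C(E₁, E₂), (∀ e, f₂ (K₂ e) = f₁ e) ∧ (∀ a : f₁ ⁻¹' A, K₂ a = k₂ a) ∧
      ∃ H : C(E₁ × I, E₂), (∀ e, H (e, 0) = K₁ e) ∧ (∀ e, H (e, 1) = K₂ e) ∧
        ∀ (e : E₁) (t : I), f₂ (H (e, t)) = f₁ e := by
  -- regular lifting applied to a constant path (with arbitrary proof of constancy)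
  have hregc : ∀ (e : E₂) (α : C(I, O)) (h : f₂ e = α 0),
      (∀ s, α s = f₂ e) → ∀ t, L ⟨(e, α), h⟩ t = e := by
    intro e α h hc t
    have : (⟨(e, α), h⟩ : {p : E₂ × C(I, O) // f₂ p.1 = p.2 0}) =
        ⟨(e, ContinuousMap.const I (f₂ e)), rfl⟩ := by
      apply Subtype.ext
      exact Prod.ext rfl (ContinuousMap.ext fun s => hc s)
    rw [this, hreg]
  -- multiplication on I is continuous
  have hmulc : Continuous fun p : I × I => p.1 * p.2 := by
    apply Continuous.subtype_mk
    exact Continuous.mul (continuous_subtype_val.comp continuous_fst)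
      (continuous_subtype_val.comp continuous_snd)
  -- Step 1: HEP gives a (not necessarily fiber) homotopy H from K₁ extending Rk
  obtain ⟨H, hH0, hHA⟩ := hHEP K₁
    ⟨fun p => (Rk p : E₂), continuous_subtype_val.comp Rk.continuous⟩
    (fun a => by simp only [ContinuousMap.coe_mk]; rw [hRk0, hK₁ext])
  -- Step 2: the correcting paths
  let F : C((E₁ × I) × I, O) :=
    ⟨fun q => f₂ (H (q.1.1, q.1.2 * σ q.2)),
      f₂.continuous.comp (H.continuous.comp
        ((continuous_fst.comp continuous_fst).prodMk
          (hmulc.comp ((continuous_snd.comp continuous_fst).prodMk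
            (continuous_symm.comp continuous_snd)))))⟩
  have hF0 : ∀ q : E₁ × I, f₂ (H q) = F.curry q 0 := by
    intro q
    simp only [F, ContinuousMap.curry_apply, ContinuousMap.coe_mk, symm_zero, mul_one]
  have hF1 : ∀ (q : E₁ × I) (s : I), F.curry q s = f₂ (H (q.1, q.2 * σ s)) := fun _ _ => rfl
  -- Step 3: the corrected homotopy
  let G : C(E₁ × I, E₂) :=
    ⟨fun q => L ⟨(H q, F.curry q), hF0 q⟩ 1,
      (continuous_eval_const 1).comp (L.continuous.comp
        ((H.continuous.prodMk F.curry.continuous).subtype_mk _))⟩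
  -- G is a fiber homotopy
  have hGfib : ∀ (e : E₁) (t : I), f₂ (G (e, t)) = f₁ e := by
    intro e t
    show f₂ (L ⟨(H (e, t), F.curry (e, t)), _⟩ 1) = f₁ e
    rw [hLf]
    show F.curry (e, t) 1 = f₁ e
    rw [hF1]
    simp only [symm_one, mul_zero]
    rw [hH0, hK₁fib]
  -- G at time 0 is K₁
  have hG0 : ∀ e : E₁, G (e, 0) = K₁ e := by
    intro e
    show L ⟨(H (e, 0), F.curry (e, 0)), _⟩ 1 = K₁ e
    rw [hregc _ _ _ (fun s => by rw [hF1]; simp [zero_mul]), hH0]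
  -- G on A agrees with Rk
  have hGA : ∀ (a : f₁ ⁻¹' A) (t : I), G (a, t) = (Rk (a, t) : E₂) := by
    intro a t
    show L ⟨(H (a, t), F.curry (a, t)), _⟩ 1 = (Rk (a, t) : E₂)
    rw [hregc _ _ _ (fun s => by
      rw [hF1]
      show f₂ (H ((a : E₁), t * σ s)) = f₂ (H ((a : E₁), t))
      rw [hHA a (t * σ s), hHA a t]
      show f₂ (Rk (a, t * σ s)) = f₂ (Rk (a, t))
      rw [hRkfib, hRkfib])]
    exact hHA a t
  refine ⟨⟨fun e => G (e, 1), G.continuous.comp (continuous_id.prodMk continuous_const)⟩,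
    fun e => hGfib e 1, fun a => by simp only [ContinuousMap.coe_mk]; rw [hGA a 1, hRk1],
    G, hG0, fun e => rfl, hGfib⟩
end

section
/- Let f : E → O admit two regular lifting functions L_f and L'_f, let r₀ ∈ O and F = f⁻¹(r₀). Then the associated Lf-functions Θ_{L_f}, Θ_{L'_f} : Ω(O, r₀) × F → F, given by Θ(α, e) = (lifting function)(e, α)(1), are homotopic as continuous maps. -/
open unitInterval

universe u

/-- projection onto `I`. -/
noncomputable def prI (x : ℝ) : I := Set.projIcc 0 1 zero_le_one x

@[simp] lemma prI_coe (x : I) : prI (x : ℝ) = x := Set.projIcc_val zero_le_one x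

/-- `(t, s) ↦ t * s` on `I`. -/
noncomputable def gmul : C(I × I, I) :=
  ⟨fun p => prI ((p.1 : ℝ) * (p.2 : ℝ)),
    (continuous_projIcc).comp (by fun_prop)⟩

/-- `(t, s) ↦ t + (1 - t) * s` on `I`. -/
noncomputable def gaff : C(I × I, I) :=
  ⟨fun p => prI ((p.1 : ℝ) + (1 - (p.1 : ℝ)) * (p.2 : ℝ)),
    (continuous_projIcc).comp (by fun_prop)⟩

@[simp] lemma gmul_snd_zero (t : I) : gmul (t, 0) = 0 := by
  have : ((t : ℝ) * ((0 : I) : ℝ)) = ((0 : I) : ℝ) := by norm_num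
  simp only [gmul, ContinuousMap.coe_mk, this, prI_coe]
  exact (congrArg prI this).trans (prI_coe _)

@[simp] lemma gmul_snd_one (t : I) : gmul (t, 1) = t := by
  have : ((t : ℝ) * ((1 : I) : ℝ)) = (t : ℝ) := by norm_num
  simp only [gmul, ContinuousMap.coe_mk, this, prI_coe]
  exact (congrArg prI this).trans (prI_coe _)

@[simp] lemma gmul_fst_zero (s : I) : gmul (0, s) = 0 := by
  have : (((0 : I) : ℝ) * (s : ℝ)) = ((0 : I) : ℝ) := by norm_num
  simp only [gmul, ContinuousMap.coe_mk, this, prI_coe]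
  exact (congrArg prI this).trans (prI_coe _)

@[simp] lemma gmul_fst_one (s : I) : gmul (1, s) = s := by
  have : (((1 : I) : ℝ) * (s : ℝ)) = (s : ℝ) := by norm_num
  simp only [gmul, ContinuousMap.coe_mk, this, prI_coe]
  exact (congrArg prI this).trans (prI_coe _)

@[simp] lemma gaff_snd_zero (t : I) : gaff (t, 0) = t := by
  have : ((t : ℝ) + (1 - (t : ℝ)) * ((0 : I) : ℝ)) = (t : ℝ) := by norm_num
  simp only [gaff, ContinuousMap.coe_mk, this, prI_coe]
  exact (congrArg prI this).trans (prI_coe _)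

@[simp] lemma gaff_snd_one (t : I) : gaff (t, 1) = 1 := by
  have : ((t : ℝ) + (1 - (t : ℝ)) * ((1 : I) : ℝ)) = ((1 : I) : ℝ) := by norm_num
  simp only [gaff, ContinuousMap.coe_mk, this, prI_coe]
  exact (congrArg prI this).trans (prI_coe _)

@[simp] lemma gaff_fst_zero (s : I) : gaff (0, s) = s := by
  have : (((0 : I) : ℝ) + (1 - ((0 : I) : ℝ)) * (s : ℝ)) = (s : ℝ) := by norm_num
  simp only [gaff, ContinuousMap.coe_mk, this, prI_coe]
  exact (congrArg prI this).trans (prI_coe _)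

@[simp] lemma gaff_fst_one (s : I) : gaff (1, s) = 1 := by
  have : (((1 : I) : ℝ) + (1 - ((1 : I) : ℝ)) * (s : ℝ)) = ((1 : I) : ℝ) := by norm_num
  simp only [gaff, ContinuousMap.coe_mk, this, prI_coe]
  exact (congrArg prI this).trans (prI_coe _)

section paths

variable {O : Type u} [TopologicalSpace O]

/-- `s ↦ α (t * s)`. -/
noncomputable def lowPath (α : C(I, O)) (t : I) : C(I, O) := α.comp (gmul.curry t)

/-- `s ↦ α (t + (1 - t) * s)`. -/
noncomputable def highPath (α : C(I, O)) (t : I) : C(I, O) := α.comp (gaff.curry t)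

lemma lowPath_apply (α : C(I, O)) (t s : I) : lowPath α t s = α (gmul (t, s)) := rfl
lemma highPath_apply (α : C(I, O)) (t s : I) : highPath α t s = α (gaff (t, s)) := rfl

@[simp] lemma lowPath_zero (α : C(I, O)) (t : I) : lowPath α t 0 = α 0 := by
  rw [lowPath_apply, gmul_snd_zero]
@[simp] lemma lowPath_one (α : C(I, O)) (t : I) : lowPath α t 1 = α t := by
  rw [lowPath_apply, gmul_snd_one]
@[simp] lemma highPath_zero (α : C(I, O)) (t : I) : highPath α t 0 = α t := by
  rw [highPath_apply, gaff_snd_zero]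
@[simp] lemma highPath_one (α : C(I, O)) (t : I) : highPath α t 1 = α 1 := by
  rw [highPath_apply, gaff_snd_one]

lemma highPath_at_zero (α : C(I, O)) : highPath α 0 = α := by
  ext s; rw [highPath_apply, gaff_fst_zero]

lemma cont_lowPath : Continuous fun p : C(I, O) × I => lowPath p.1 p.2 :=
  ContinuousMap.continuous_comp'.comp
    (((gmul.curry).continuous.comp continuous_snd).prodMk continuous_fst)

lemma cont_highPath : Continuous fun p : C(I, O) × I => highPath p.1 p.2 :=
  ContinuousMap.continuous_comp'.comp
    (((gaff.curry).continuous.comp continuous_snd).prodMk continuous_fst)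

end paths

/-- the Lf-functions associated with two regular lifting functions of the
same map `f` are homotopic. -/
theorem stmt4 {E O : Type u} [TopologicalSpace E] [TopologicalSpace O] (f : C(E, O))
    (L L' : C({p : E × C(I, O) // f p.1 = p.2 0}, C(I, E)))
    (hL0 : ∀ p, L p 0 = p.1.1)
    (hLf : ∀ p t, f (L p t) = p.1.2 t)
    (hreg : ∀ (e : E) (t : I), L ⟨(e, ContinuousMap.const I (f e)), rfl⟩ t = e)
    (hL0' : ∀ p, L' p 0 = p.1.1)
    (hLf' : ∀ p t, f (L' p t) = p.1.2 t)
    (hreg' : ∀ (e : E) (t : I), L' ⟨(e, ContinuousMap.const I (f e)), rfl⟩ t = e)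
    (r₀ : O) :
    ∃ Θ Θ' : C({α : C(I, O) // α 0 = r₀ ∧ α 1 = r₀} × {e : E // f e = r₀},
               {e : E // f e = r₀}),
      (∀ (α : {α : C(I, O) // α 0 = r₀ ∧ α 1 = r₀}) (e : {e : E // f e = r₀}),
        (Θ (α, e) : E) = L ⟨((e : E), (α : C(I, O))), e.2.trans α.2.1.symm⟩ 1) ∧
      (∀ (α : {α : C(I, O) // α 0 = r₀ ∧ α 1 = r₀}) (e : {e : E // f e = r₀}),
        (Θ' (α, e) : E) = L' ⟨((e : E), (α : C(I, O))), e.2.trans α.2.1.symm⟩ 1) ∧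
      Θ.Homotopic Θ' := by
  classical
  set Ω := {α : C(I, O) // α 0 = r₀ ∧ α 1 = r₀}
  set F := {e : E // f e = r₀}
  -- the two Θ maps
  refine ⟨⟨fun p => ⟨L ⟨((p.2 : E), (p.1 : C(I, O))), p.2.2.trans p.1.2.1.symm⟩ 1,
      (hLf _ 1).trans p.1.2.2⟩, ?_⟩,
    ⟨fun p => ⟨L' ⟨((p.2 : E), (p.1 : C(I, O))), p.2.2.trans p.1.2.1.symm⟩ 1,
      (hLf' _ 1).trans p.1.2.2⟩, ?_⟩, fun α e => rfl, fun α e => rfl, ?_⟩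
  · exact Continuous.subtype_mk ((continuous_eval_const 1).comp (L.continuous.comp
      (Continuous.subtype_mk
        ((continuous_subtype_val.comp continuous_snd).prodMk
          (continuous_subtype_val.comp continuous_fst)) _))) _
  · exact Continuous.subtype_mk ((continuous_eval_const 1).comp (L'.continuous.comp
      (Continuous.subtype_mk
        ((continuous_subtype_val.comp continuous_snd).prodMk
          (continuous_subtype_val.comp continuous_fst)) _))) _
  -- the homotopy
  refine ⟨⟨⟨fun q =>
      ⟨L ⟨(L' ⟨((q.2.2 : E), lowPath (q.2.1 : C(I, O)) q.1),
              q.2.2.2.trans ((lowPath_zero _ _).trans q.2.1.2.1).symm⟩ 1,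
            highPath (q.2.1 : C(I, O)) q.1),
          (hLf' _ 1).trans ((lowPath_one _ _).trans (highPath_zero _ _).symm)⟩ 1,
        (hLf _ 1).trans ((highPath_one _ _).trans q.2.1.2.2)⟩, ?_⟩, ?_, ?_⟩⟩
  · -- continuity of the homotopy
    apply Continuous.subtype_mk
    apply (continuous_eval_const 1).comp
    apply L.continuous.comp
    apply Continuous.subtype_mk
    refine Continuous.prodMk ?_ ?_
    · apply (continuous_eval_const 1).comp
      apply L'.continuous.comp
      apply Continuous.subtype_mk
      refine Continuous.prodMk
        (continuous_subtype_val.comp (continuous_snd.comp continuous_snd)) ?_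
      exact cont_lowPath.comp
        (((continuous_subtype_val.comp (continuous_fst.comp continuous_snd))).prodMk
          continuous_fst)
    · exact cont_highPath.comp
        (((continuous_subtype_val.comp (continuous_fst.comp continuous_snd))).prodMk
          continuous_fst)
  · -- at time 0 we recover Θ
    rintro ⟨α, e⟩
    apply Subtype.ext
    have hconst : lowPath (α : C(I, O)) 0 = ContinuousMap.const I (f (e : E)) := by
      ext s
      rw [lowPath_apply, gmul_fst_zero, ContinuousMap.const_apply, α.2.1, e.2]
    have hinner :
        L' ⟨((e : E), lowPath (α : C(I, O)) 0),
            e.2.trans ((lowPath_zero _ _).trans α.2.1).symm⟩ 1 = (e : E) := by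
      rw [show (⟨((e : E), lowPath (α : C(I, O)) 0),
            e.2.trans ((lowPath_zero _ _).trans α.2.1).symm⟩ :
            {p : E × C(I, O) // f p.1 = p.2 0}) =
          ⟨((e : E), ContinuousMap.const I (f (e : E))), rfl⟩ from
        Subtype.ext (Prod.ext_iff.mpr ⟨rfl, hconst⟩)]
      exact hreg' (e : E) 1
    exact congrArg (fun p => L p 1)
      (Subtype.ext (Prod.ext_iff.mpr ⟨hinner, highPath_at_zero _⟩))
  · -- at time 1 we recover Θ'
    rintro ⟨α, e⟩
    apply Subtype.ext
    have hlow : lowPath (α : C(I, O)) 1 = (α : C(I, O)) := by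
      ext s; rw [lowPath_apply, gmul_fst_one]
    have hinner :
        L' ⟨((e : E), lowPath (α : C(I, O)) 1),
            e.2.trans ((lowPath_zero _ _).trans α.2.1).symm⟩ 1 =
        L' ⟨((e : E), (α : C(I, O))), e.2.trans α.2.1.symm⟩ 1 :=
      congrArg (fun p => L' p 1) (Subtype.ext (Prod.ext_iff.mpr ⟨rfl, hlow⟩))
    set e' : E := L' ⟨((e : E), (α : C(I, O))), e.2.trans α.2.1.symm⟩ 1 with he'
    have hfe' : f e' = r₀ := (hLf' _ 1).trans α.2.2
    have hconst : highPath (α : C(I, O)) 1 = ContinuousMap.const I (f e') := by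
      ext s
      rw [highPath_apply, gaff_fst_one, ContinuousMap.const_apply, hfe', α.2.2]
    calc L ⟨(L' ⟨((e : E), lowPath (α : C(I, O)) 1),
              e.2.trans ((lowPath_zero _ _).trans α.2.1).symm⟩ 1,
            highPath (α : C(I, O)) 1),
          (hLf' _ 1).trans ((lowPath_one _ _).trans (highPath_zero _ _).symm)⟩ 1
        = L ⟨(e', ContinuousMap.const I (f e')), rfl⟩ 1 :=
          congrArg (fun p => L p 1)
            (Subtype.ext (Prod.ext_iff.mpr ⟨hinner, hconst⟩))
      _ = e' := hreg e' 1
end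

section
/- Let f : E → O admit a regular lifting function L_f. Then the map D : Δf → E defined by D(e, α) = L_f(L_f(e, α)(1), ᾱ)(1), where ᾱ is the reverse path of α, is homotopic to the projection map D₀ : Δf → E, D₀(e, α) = e. Moreover the homotopy F can be chosen so that f(F((e,α),t)) = α(0) for all (e,α) ∈ Δf and t ∈ I. -/
open unitInterval

universe u

lemma continuous_Imul : Continuous (fun ts : I × I => ts.1 * ts.2) :=
  Continuous.subtype_mk (by fun_prop :
    Continuous fun ts : I × I => (ts.1 : ℝ) * (ts.2 : ℝ)) _

/-- Truncation: `pTrunc (α, t)` is the path `s ↦ α (t * s)`. -/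
def pTrunc {O : Type u} [TopologicalSpace O] : C(C(I, O) × I, C(I, O)) :=
  ContinuousMap.curry ⟨fun x => x.1.1 (x.1.2 * x.2),
    ContinuousEval.continuous_eval.comp
      ((continuous_fst.comp continuous_fst).prodMk
        (continuous_Imul.comp
          ((continuous_snd.comp continuous_fst).prodMk continuous_snd)))⟩

lemma Trunc_apply {O : Type u} [TopologicalSpace O] (α : C(I, O)) (t s : I) :
    pTrunc (α, t) s = α (t * s) := rfl

/-- the map `D(e,α) = L_f(L_f(e,α)(1), ᾱ)(1)` is homotopic to the
projection `D₀(e,α) = e`, via a homotopy `H` with `f(H((e,α),t)) = α(0)`. -/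
theorem stmt5 {E O : Type u} [TopologicalSpace E] [TopologicalSpace O] (f : C(E, O))
    (L : C({p : E × C(I, O) // f p.1 = p.2 0}, C(I, E)))
    (hL0 : ∀ p, L p 0 = p.1.1)
    (hLf : ∀ p t, f (L p t) = p.1.2 t)
    (hreg : ∀ (e : E) (t : I), L ⟨(e, ContinuousMap.const I (f e)), rfl⟩ t = e) :
    ∃ H : C({p : E × C(I, O) // f p.1 = p.2 0} × I, E),
      (∀ p : {p : E × C(I, O) // f p.1 = p.2 0}, H (p, 0) = p.1.1) ∧
      (∀ p : {p : E × C(I, O) // f p.1 = p.2 0},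
        H (p, 1) = L ⟨(L p 1, p.1.2.comp ⟨unitInterval.symm, continuous_symm⟩),
          (hLf p 1).trans (by simp)⟩ 1) ∧
      ∀ (p : {p : E × C(I, O) // f p.1 = p.2 0}) (t : I), f (H (p, t)) = p.1.2 0 := by
  set Δ := {p : E × C(I, O) // f p.1 = p.2 0} with hΔ
  set rev : C(I, I) := ⟨unitInterval.symm, continuous_symm⟩ with hrev
  have h₁ : ∀ q : Δ × I, f q.1.1.1 = pTrunc (q.1.1.2, q.2) 0 := fun q => by
    rw [Trunc_apply, mul_zero]; exact q.1.2
  have h₂ : ∀ q : Δ × I,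
      f (L ⟨(q.1.1.1, pTrunc (q.1.1.2, q.2)), h₁ q⟩ 1)
        = ((pTrunc (q.1.1.2, q.2)).comp rev) 0 := fun q => by
    rw [ContinuousMap.comp_apply]
    simp only [hrev, ContinuousMap.coe_mk, unitInterval.symm_zero]
    exact hLf _ 1
  refine ⟨⟨fun q => L ⟨(L ⟨(q.1.1.1, pTrunc (q.1.1.2, q.2)), h₁ q⟩ 1,
      (pTrunc (q.1.1.2, q.2)).comp rev), h₂ q⟩ 1, ?_⟩, ?_, ?_, ?_⟩
  · -- continuity
    have cT : Continuous fun q : Δ × I => pTrunc (q.1.1.2, q.2) :=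
      pTrunc.continuous.comp ((continuous_snd.comp (continuous_subtype_val.comp continuous_fst)).prodMk continuous_snd)
    have cinner : Continuous fun q : Δ × I =>
        L ⟨(q.1.1.1, pTrunc (q.1.1.2, q.2)), h₁ q⟩ 1 :=
      (continuous_eval_const 1).comp
        (L.continuous.comp (Continuous.subtype_mk ((continuous_fst.comp (continuous_subtype_val.comp continuous_fst) :
          Continuous fun q : Δ × I => q.1.1.1).prodMk cT) h₁))
    have crev : Continuous fun q : Δ × I => (pTrunc (q.1.1.2, q.2)).comp rev :=
      (ContinuousMap.continuous_precomp rev).comp cT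
    exact (continuous_eval_const 1).comp
      (L.continuous.comp (Continuous.subtype_mk (cinner.prodMk crev) h₂))
  · -- H (p, 0) = p.1.1
    intro p
    have hT0 : pTrunc (p.1.2, (0 : I)) = ContinuousMap.const I (f p.1.1) := by
      ext s; rw [Trunc_apply, zero_mul, ← p.2]; rfl
    have step1 : (⟨(p.1.1, pTrunc (p.1.2, (0 : I))), h₁ (p, 0)⟩ : Δ)
        = ⟨(p.1.1, ContinuousMap.const I (f p.1.1)), rfl⟩ :=
      Subtype.ext (Prod.ext rfl hT0)
    have i1 : L ⟨(p.1.1, pTrunc (p.1.2, (0 : I))), h₁ (p, 0)⟩ 1 = p.1.1 := by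
      rw [congrArg L step1]; exact hreg _ 1
    show L ⟨(L ⟨(p.1.1, pTrunc (p.1.2, (0 : I))), h₁ (p, 0)⟩ 1,
        (pTrunc (p.1.2, (0 : I))).comp rev), h₂ (p, 0)⟩ 1 = p.1.1
    have step2 : (⟨(L ⟨(p.1.1, pTrunc (p.1.2, (0 : I))), h₁ (p, 0)⟩ 1,
        (pTrunc (p.1.2, (0 : I))).comp rev), h₂ (p, 0)⟩ : Δ)
        = ⟨(p.1.1, ContinuousMap.const I (f p.1.1)), rfl⟩ := by
      refine Subtype.ext (Prod.ext i1 ?_)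
      show (pTrunc (p.1.2, (0 : I))).comp rev = ContinuousMap.const I (f p.1.1)
      ext s
      rw [ContinuousMap.comp_apply, Trunc_apply, zero_mul, ← p.2]; rfl
    rw [congrArg L step2]; exact hreg _ 1
  · -- H (p, 1) = D p
    intro p
    have hT1 : pTrunc (p.1.2, (1 : I)) = p.1.2 := by
      ext s; rw [Trunc_apply, one_mul]
    have step1 : (⟨(p.1.1, pTrunc (p.1.2, (1 : I))), h₁ (p, 1)⟩ : Δ) = p :=
      Subtype.ext (Prod.ext rfl hT1)
    have i1 : L ⟨(p.1.1, pTrunc (p.1.2, (1 : I))), h₁ (p, 1)⟩ = L p :=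
      congrArg L step1
    show L ⟨(L ⟨(p.1.1, pTrunc (p.1.2, (1 : I))), h₁ (p, 1)⟩ 1,
        (pTrunc (p.1.2, (1 : I))).comp rev), h₂ (p, 1)⟩ 1 = _
    exact congrArg (fun x => L x 1)
      (Subtype.ext (Prod.ext (ContinuousMap.congr_fun i1 1)
        (show (pTrunc (p.1.2, (1 : I))).comp rev = _ by rw [hT1])))
  · -- f (H (p, t)) = p.1.2 0
    intro p t
    show f (L ⟨(L ⟨(p.1.1, pTrunc (p.1.2, t)), h₁ (p, t)⟩ 1,
        (pTrunc (p.1.2, t)).comp rev), h₂ (p, t)⟩ 1) = p.1.2 0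
    refine (hLf _ 1).trans ?_
    rw [ContinuousMap.comp_apply]
    simp only [hrev, ContinuousMap.coe_mk, unitInterval.symm_one]
    rw [Trunc_apply, mul_zero]
end

section
/- Let f : E → O admit a regular lifting function, let r₀ ∈ O, F = f⁻¹(r₀), and assume F is locally compact Hausdorff. For each loop w ∈ Ω(O, r₀), the map φ(w) : F → F, φ(w)(e) = L_f(e, w)(1), is a homotopy equivalence of F with itself, with homotopy inverse e ↦ L_f(e, w̄)(1), where w̄ is the reverse loop. Moreover the assignment φ : Ω(O, r₀) → C(F, F) (with the compact-open topology) is continuous. -/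
open unitInterval

universe u

/-- Multiplication `I × I → I` as a continuous map. -/
def stmt6_iMul : C(I × I, I) :=
  ⟨fun p => ⟨p.1.1 * p.2.1, mul_nonneg p.1.2.1 p.2.2.1, mul_le_one₀ p.1.2.2 p.2.2.1 p.2.2.2⟩,
    by
      apply Continuous.subtype_mk
      exact (continuous_subtype_val.comp continuous_fst).mul
        (continuous_subtype_val.comp continuous_snd)⟩

lemma stmt6_iMul_zero_left (t : I) : stmt6_iMul (0, t) = 0 := Subtype.ext (zero_mul _)
lemma stmt6_iMul_zero_right (t : I) : stmt6_iMul (t, 0) = 0 := Subtype.ext (mul_zero _)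
lemma stmt6_iMul_one_left (t : I) : stmt6_iMul (1, t) = t := Subtype.ext (one_mul _)
lemma stmt6_iMul_one_right (t : I) : stmt6_iMul (t, 1) = t := Subtype.ext (mul_one _)

/-- for `F = f⁻¹(r₀)` locally compact Hausdorff, each `φ(w)(e) = L_f(e,w)(1)`
is a homotopy self-equivalence of `F` with homotopy inverse `e ↦ L_f(e, w̄)(1)`, and
`φ : Ω(O,r₀) → C(F,F)` is continuous. -/
theorem stmt6 {E O : Type u} [TopologicalSpace E] [TopologicalSpace O] [T2Space O]
    (f : C(E, O))
    (L : C({p : E × C(I, O) // f p.1 = p.2 0}, C(I, E)))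
    (hL0 : ∀ p, L p 0 = p.1.1)
    (hLf : ∀ p t, f (L p t) = p.1.2 t)
    (hreg : ∀ (e : E) (t : I), L ⟨(e, ContinuousMap.const I (f e)), rfl⟩ t = e)
    (r₀ : O)
    [LocallyCompactSpace {e : E // f e = r₀}] [T2Space {e : E // f e = r₀}] :
    ∃ φ : C({w : C(I, O) // w 0 = r₀ ∧ w 1 = r₀}, C({e : E // f e = r₀}, {e : E // f e = r₀})),
      (∀ (w : {w : C(I, O) // w 0 = r₀ ∧ w 1 = r₀}) (e : {e : E // f e = r₀}),
        ((φ w) e : E) = L ⟨((e : E), (w : C(I, O))), e.2.trans w.2.1.symm⟩ 1) ∧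
      ∀ w : {w : C(I, O) // w 0 = r₀ ∧ w 1 = r₀},
        ∃ ψ : C({e : E // f e = r₀}, {e : E // f e = r₀}),
          (∀ e : {e : E // f e = r₀},
            (ψ e : E) = L ⟨((e : E), (w : C(I, O)).comp ⟨unitInterval.symm, continuous_symm⟩),
              by simp only [ContinuousMap.comp_apply, ContinuousMap.coe_mk,
                unitInterval.symm_zero]; rw [e.2, w.2.2]⟩ 1) ∧
          ((φ w).comp ψ).Homotopic (ContinuousMap.id _) ∧
          (ψ.comp (φ w)).Homotopic (ContinuousMap.id _) := by
  classical
  -- congruence helper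
  have Lc : ∀ {e e' : E} {α α' : C(I, O)} (h : f e = α 0) (h' : f e' = α' 0),
      e = e' → α = α' → L ⟨(e, α), h⟩ 1 = L ⟨(e', α'), h'⟩ 1 := by
    rintro e e' α α' h h' rfl rfl; rfl
  -- the uncurried translation map
  have hmem : ∀ (p : {w : C(I, O) // w 0 = r₀ ∧ w 1 = r₀} × {e : E // f e = r₀}),
      f (p.2 : E) = (p.1 : C(I, O)) 0 := fun p => p.2.2.trans p.1.2.1.symm
  let T : C(({w : C(I, O) // w 0 = r₀ ∧ w 1 = r₀} × {e : E // f e = r₀}),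
      {e : E // f e = r₀}) :=
    ⟨fun p => ⟨L ⟨((p.2 : E), (p.1 : C(I, O))), hmem p⟩ 1, by rw [hLf]; exact p.1.2.2⟩, by
      apply Continuous.subtype_mk
      refine (ContinuousEvalConst.continuous_eval_const (1 : I)).comp
        (L.continuous.comp (Continuous.subtype_mk ?_ _))
      exact (continuous_subtype_val.comp continuous_snd).prodMk
        (continuous_subtype_val.comp continuous_fst)⟩
  let φ := T.curry
  -- reversal
  let rev : {w : C(I, O) // w 0 = r₀ ∧ w 1 = r₀} → {w : C(I, O) // w 0 = r₀ ∧ w 1 = r₀} :=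
    fun w => ⟨(w : C(I, O)).comp ⟨unitInterval.symm, continuous_symm⟩,
      by simp only [ContinuousMap.comp_apply, ContinuousMap.coe_mk, unitInterval.symm_zero]
         exact w.2.2,
      by simp only [ContinuousMap.comp_apply, ContinuousMap.coe_mk, unitInterval.symm_one]
         exact w.2.1⟩
  have rev_rev : ∀ w, rev (rev w) = w := fun w =>
    Subtype.ext (ContinuousMap.ext fun t => by
      simp [rev, unitInterval.symm_symm])
  -- the key homotopy
  have key : ∀ u : {w : C(I, O) // w 0 = r₀ ∧ w 1 = r₀},
      ((φ (rev u)).comp (φ u)).Homotopic (ContinuousMap.id {e : E // f e = r₀}) := by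
    intro u
    let A : C(I × I, O) := (u : C(I, O)).comp stmt6_iMul
    let B : C(I × I, O) := (u : C(I, O)).comp
      (stmt6_iMul.comp ((ContinuousMap.id I).prodMap ⟨σ, continuous_symm⟩))
    have h1 : ∀ (p : I × {e : E // f e = r₀}), f (p.2 : E) = (A.curry p.1) 0 := by
      intro p
      show f (p.2 : E) = (u : C(I, O)) (stmt6_iMul (p.1, 0))
      rw [stmt6_iMul_zero_right, u.2.1, p.2.2]
    let e1 : I × {e : E // f e = r₀} → E :=
      fun p => L ⟨((p.2 : E), A.curry p.1), h1 p⟩ 1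
    have ce1 : Continuous e1 := by
      refine (ContinuousEvalConst.continuous_eval_const (1 : I)).comp
        (L.continuous.comp (Continuous.subtype_mk ?_ _))
      exact (continuous_subtype_val.comp continuous_snd).prodMk
        (A.curry.continuous.comp continuous_fst)
    have he1 : ∀ p, f (e1 p) = (u : C(I, O)) p.1 := by
      intro p
      show f (L _ 1) = _
      rw [hLf]
      show (u : C(I, O)) (stmt6_iMul (p.1, 1)) = _
      rw [stmt6_iMul_one_right]
    have h2 : ∀ p, f (e1 p) = (B.curry p.1) 0 := by
      intro p
      rw [he1 p]
      show _ = (u : C(I, O)) (stmt6_iMul (p.1, σ 0))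
      rw [unitInterval.symm_zero, stmt6_iMul_one_right]
    have hmemF : ∀ p, f (L ⟨(e1 p, B.curry p.1), h2 p⟩ 1) = r₀ := by
      intro p
      rw [hLf]
      show (u : C(I, O)) (stmt6_iMul (p.1, σ 1)) = r₀
      rw [unitInterval.symm_one, stmt6_iMul_zero_right, u.2.1]
    let H : C(I × {e : E // f e = r₀}, {e : E // f e = r₀}) :=
      ⟨fun p => ⟨L ⟨(e1 p, B.curry p.1), h2 p⟩ 1, hmemF p⟩, by
        apply Continuous.subtype_mk
        refine (ContinuousEvalConst.continuous_eval_const (1 : I)).comp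
          (L.continuous.comp (Continuous.subtype_mk ?_ _))
        exact ce1.prodMk (B.curry.continuous.comp continuous_fst)⟩
    have hzero : ∀ x, H (0, x) = (ContinuousMap.id {e : E // f e = r₀}) x := by
      intro x
      apply Subtype.ext
      show L ⟨(e1 (0, x), B.curry 0), _⟩ 1 = (x : E)
      have hA : A.curry 0 = ContinuousMap.const I (f (x : E)) := by
        ext t
        show (u : C(I, O)) (stmt6_iMul (0, t)) = f (x : E)
        rw [stmt6_iMul_zero_left, u.2.1, x.2]
      have hx : e1 (0, x) = (x : E) := by
        refine (Lc _ rfl rfl hA).trans (hreg _ 1)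
      have hB : B.curry 0 = ContinuousMap.const I (f (e1 (0, x))) := by
        ext t
        show (u : C(I, O)) (stmt6_iMul (0, σ t)) = f (e1 (0, x))
        rw [stmt6_iMul_zero_left, u.2.1, hx, x.2]
      refine ((Lc _ rfl rfl hB).trans (hreg _ 1)).trans hx
    have hone : ∀ x, H (1, x) = ((φ (rev u)).comp (φ u)) x := by
      intro x
      apply Subtype.ext
      show L ⟨(e1 (1, x), B.curry 1), _⟩ 1
        = L ⟨((T (u, x) : E), (rev u : C(I, O))), _⟩ 1
      have hx : e1 (1, x) = (T (u, x) : E) := by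
        refine Lc _ _ rfl ?_
        ext t
        show (u : C(I, O)) (stmt6_iMul (1, t)) = (u : C(I, O)) t
        rw [stmt6_iMul_one_left]
      have hB : B.curry 1 = (rev u : C(I, O)) := by
        ext t
        show (u : C(I, O)) (stmt6_iMul (1, σ t)) = (u : C(I, O)) (σ t)
        rw [stmt6_iMul_one_left]
      exact Lc _ _ hx hB
    have : (ContinuousMap.id {e : E // f e = r₀}).Homotopic
        ((φ (rev u)).comp (φ u)) := ⟨⟨H, hzero, hone⟩⟩
    exact this.symm
  refine ⟨φ, fun w e => rfl, fun w => ?_⟩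
  refine ⟨φ (rev w), fun e => rfl, ?_, key w⟩
  have h2 := key (rev w)
  rw [rev_rev] at h2
  exact h2
end

section
/- Let f₁ : E₁ → O and f₂ : E₂ → O admit regular lifting functions L_{f₁}, L_{f₂}, fix r₀ ∈ O, and set F¹ = f₁⁻¹(r₀), F² = f₂⁻¹(r₀). If f₁ and f₂ are fiber homotopy equivalent (there exist fiber maps h : E₁ → E₂ and g : E₂ → E₁ with g ∘ h fiber homotopic to id_{E₁} and h ∘ g fiber homotopic to id_{E₂}), then the Lf-functions are conjugate: letting h₀ = h|_{F¹} : F¹ → F² and g₀ = g|_{F²} : F² → F¹, one has g₀ ∘ Θ_{L_{f₂}} ∘ (id_{Ω(O,r₀)} × h₀) ≃ (g₀ ∘ h₀) ∘ Θ_{L_{f₁}} as maps Ω(O,r₀) × F¹ → F¹. -/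
open unitInterval

universe u

noncomputable def sig : C(I × I, I) :=
  ⟨fun p => ⟨p.1 + p.2 * (1 - p.1), by
      obtain ⟨⟨s, hs0, hs1⟩, ⟨t, ht0, ht1⟩⟩ := p
      constructor <;> simp only [Set.mem_Icc] <;> nlinarith⟩, by
    apply Continuous.subtype_mk
    fun_prop⟩

theorem sig_s0 (s : I) : sig (s, 0) = s := by apply Subtype.ext; simp [sig]
theorem sig_0t (t : I) : sig (0, t) = t := by apply Subtype.ext; simp [sig]
theorem sig_1t (t : I) : sig (1, t) = 1 := by apply Subtype.ext; simp [sig]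
theorem sig_s1 (s : I) : sig (s, 1) = 1 := by apply Subtype.ext; simp [sig]

section main
variable {E₁ E₂ O : Type u} [TopologicalSpace E₁] [TopologicalSpace E₂]
    [TopologicalSpace O]
    (f₁ : C(E₁, O)) (f₂ : C(E₂, O))
    (L₁ : C({p : E₁ × C(I, O) // f₁ p.1 = p.2 0}, C(I, E₁)))
    (L₂ : C({p : E₂ × C(I, O) // f₂ p.1 = p.2 0}, C(I, E₂)))
    (r₀ : O)
    (h : C(E₁, E₂)) (g : C(E₂, E₁))

-- core map
noncomputable def Phi
    (hL₁f : ∀ p t, f₁ (L₁ p t) = p.1.2 t)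
    (hL₂f : ∀ p t, f₂ (L₂ p t) = p.1.2 t)
    (hh : ∀ e, f₂ (h e) = f₁ e) (hg : ∀ e, f₁ (g e) = f₂ e) :
    C(({α : C(I, O) // α 0 = r₀ ∧ α 1 = r₀} × {e : E₁ // f₁ e = r₀}) × I,
      {e : E₁ // f₁ e = r₀}) := by
  refine ⟨fun d =>
    ⟨g (L₂ ⟨(h (L₁ ⟨((d.1.2 : E₁), (d.1.1 : C(I, O))), d.1.2.2.trans d.1.1.2.1.symm⟩ d.2),
        (d.1.1 : C(I, O)).comp ((sig.curry) d.2)),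
      by rw [hh, hL₁f]; simp [sig_s0]⟩ 1),
    by rw [hg, hL₂f]; simpa [sig_s1] using d.1.1.2.2⟩, ?_⟩
  set D := ({α : C(I, O) // α 0 = r₀ ∧ α 1 = r₀} × {e : E₁ // f₁ e = r₀}) × I
  have hα : Continuous fun d : D => (d.1.1 : C(I, O)) :=
    continuous_subtype_val.comp (continuous_fst.comp continuous_fst)
  have he : Continuous fun d : D => (d.1.2 : E₁) :=
    continuous_subtype_val.comp (continuous_snd.comp continuous_fst)
  have hL1arg : Continuous fun d : D =>
      (⟨((d.1.2 : E₁), (d.1.1 : C(I, O))), d.1.2.2.trans d.1.1.2.1.symm⟩ :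
        {p : E₁ × C(I, O) // f₁ p.1 = p.2 0}) :=
    Continuous.subtype_mk (he.prodMk hα) _
  have hev : Continuous fun q : C(I, E₁) × I => q.1 q.2 := continuous_eval
  have h1 : Continuous fun d : D =>
      h (L₁ ⟨((d.1.2 : E₁), (d.1.1 : C(I, O))), d.1.2.2.trans d.1.1.2.1.symm⟩ d.2) :=
    h.continuous.comp (hev.comp ((L₁.continuous.comp hL1arg).prodMk continuous_snd))
  have hcomp : Continuous fun q : C(I, I) × C(I, O) => q.2.comp q.1 :=
    ContinuousMap.continuous_comp'
  have h2 : Continuous fun d : D => (d.1.1 : C(I, O)).comp (sig.curry d.2) :=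
    hcomp.comp ((sig.curry.continuous.comp continuous_snd).prodMk hα)
  have hev1 : Continuous fun q : C(I, E₂) => q 1 := continuous_eval_const 1
  exact Continuous.subtype_mk
    (g.continuous.comp (hev1.comp (L₂.continuous.comp
      (Continuous.subtype_mk (h1.prodMk h2) _)))) _

end main


/-- if `f₁`, `f₂` are fiber homotopy equivalent (via fiber maps `h`, `g`),
then their Lf-functions are conjugate:
`g₀ ∘ Θ_{L_{f₂}} ∘ (id × h₀) ≃ (g₀ ∘ h₀) ∘ Θ_{L_{f₁}}` as maps `Ω(O,r₀) × F¹ → F¹`. -/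
theorem stmt7 {E₁ E₂ O : Type u} [TopologicalSpace E₁] [TopologicalSpace E₂]
    [TopologicalSpace O]
    (f₁ : C(E₁, O)) (f₂ : C(E₂, O))
    (L₁ : C({p : E₁ × C(I, O) // f₁ p.1 = p.2 0}, C(I, E₁)))
    (hL₁0 : ∀ p, L₁ p 0 = p.1.1)
    (hL₁f : ∀ p t, f₁ (L₁ p t) = p.1.2 t)
    (hreg₁ : ∀ (e : E₁) (t : I), L₁ ⟨(e, ContinuousMap.const I (f₁ e)), rfl⟩ t = e)
    (L₂ : C({p : E₂ × C(I, O) // f₂ p.1 = p.2 0}, C(I, E₂)))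
    (hL₂0 : ∀ p, L₂ p 0 = p.1.1)
    (hL₂f : ∀ p t, f₂ (L₂ p t) = p.1.2 t)
    (hreg₂ : ∀ (e : E₂) (t : I), L₂ ⟨(e, ContinuousMap.const I (f₂ e)), rfl⟩ t = e)
    (r₀ : O)
    (h : C(E₁, E₂)) (g : C(E₂, E₁))
    (hh : ∀ e, f₂ (h e) = f₁ e) (hg : ∀ e, f₁ (g e) = f₂ e)
    (Hgh : C(E₁ × I, E₁))
    (hHgh0 : ∀ e, Hgh (e, 0) = g (h e)) (hHgh1 : ∀ e, Hgh (e, 1) = e)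
    (hHghfib : ∀ (e : E₁) (t : I), f₁ (Hgh (e, t)) = f₁ e)
    (Hhg : C(E₂ × I, E₂))
    (hHhg0 : ∀ e, Hhg (e, 0) = h (g e)) (hHhg1 : ∀ e, Hhg (e, 1) = e)
    (hHhgfib : ∀ (e : E₂) (t : I), f₂ (Hhg (e, t)) = f₂ e) :
    ∃ A B : C({α : C(I, O) // α 0 = r₀ ∧ α 1 = r₀} × {e : E₁ // f₁ e = r₀},
              {e : E₁ // f₁ e = r₀}),
      (∀ (α : {α : C(I, O) // α 0 = r₀ ∧ α 1 = r₀}) (e : {e : E₁ // f₁ e = r₀}),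
        (A (α, e) : E₁) =
          g (L₂ ⟨(h (e : E₁), (α : C(I, O))), ((hh e).trans e.2).trans α.2.1.symm⟩ 1)) ∧
      (∀ (α : {α : C(I, O) // α 0 = r₀ ∧ α 1 = r₀}) (e : {e : E₁ // f₁ e = r₀}),
        (B (α, e) : E₁) =
          g (h (L₁ ⟨((e : E₁), (α : C(I, O))), e.2.trans α.2.1.symm⟩ 1))) ∧
      A.Homotopic B := by
  set Φ := Phi f₁ f₂ L₁ L₂ r₀ h g hL₁f hL₂f hh hg with hΦ
  refine ⟨Φ.comp ⟨fun p => (p, 0), by fun_prop⟩, Φ.comp ⟨fun p => (p, 1), by fun_prop⟩,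
    ?_, ?_, ?_⟩
  · intro α e
    simp only [ContinuousMap.comp_apply, ContinuousMap.coe_mk, hΦ, Phi]
    have harg : (⟨(h (L₁ ⟨((e : E₁), (α : C(I, O))), e.2.trans α.2.1.symm⟩ 0),
        (α : C(I, O)).comp (sig.curry 0)), by
          rw [hh, hL₁f]; exact (congrArg (α : C(I, O)) (sig_0t 0)).symm⟩ :
        {p : E₂ × C(I, O) // f₂ p.1 = p.2 0}) =
        ⟨(h (e : E₁), (α : C(I, O))), ((hh e).trans e.2).trans α.2.1.symm⟩ := by
      apply Subtype.ext
      dsimp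
      rw [hL₁0]
      refine Prod.ext rfl ?_
      ext t
      simp [sig_0t]
    rw [harg]
  · intro α e
    simp only [ContinuousMap.comp_apply, ContinuousMap.coe_mk, hΦ, Phi]
    have key : ∀ (x : E₂) (β : C(I, O)) (pf : f₂ x = β 0), β = ContinuousMap.const I (f₂ x) →
        L₂ ⟨(x, β), pf⟩ 1 = x := by
      rintro x β pf hβ
      subst hβ
      exact hreg₂ x 1
    rw [key _ _ _ ?_]
    ext t
    have h1 : f₂ (h (L₁ ⟨((e : E₁), (α : C(I, O))), e.2.trans α.2.1.symm⟩ 1))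
        = (α : C(I, O)) 1 := by rw [hh, hL₁f]
    simp [h1, sig_1t]
  · exact ⟨{ toContinuousMap := Φ.comp ⟨fun q => (q.2, q.1), by fun_prop⟩,
             map_zero_left := fun p => rfl,
             map_one_left := fun p => rfl }⟩
end
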